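/- arXiv:1509.04679 — 3 statements merged into one kernel-verified Lean document; each statement's English description precedes it below -/
import Mathlib

section
/- Let N be a normal subsystem of the coefficient system A (i.e., N_σ ⊴ A_σ for all σ, preserved by the connecting maps). Then the group H^0(X, A/N) acts on the set H^1(X, N) via [n]^{ā} = [n^a] for any lift a of ā, this action is well defined, and its orbits are precisely the fibers of the natural map i_1: H^1(X,N) → H^1(X,A) sending each C^0(N)-orbit of Z^1(X,N) to the C^0(A)-orbit containing it. -/
/-! On an edge, `nᵃ = (a_j⁻¹ n a_j) · d₀a`; for `𝒩`-valued `n` and normal `𝒩` this shows that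
`nᵃ` is `𝒩`-valued exactly when `d₀a` is, i.e. when `a` lifts an element of `H⁰(X, 𝒜/𝒩)`. On a
triangle, `d₁(nᵃ)` is the conjugate of `d₁n` by `a_j`, so cocycles go to cocycles.
Well-definedness and the description of the orbits then follow from `(nᵃ)ᵃ' = n^{aa'}` and from
`a · C⁰(𝒩) = C⁰(𝒩) · a`. -/

/-- The coboundary map `d₀ : C⁰ → C¹`. -/
def d0 {A : Finset ℕ → Type*} [∀ σ, Group (A σ)]
    (α : ∀ σ τ : Finset ℕ, σ ⊆ τ → (A σ →* A τ))
    (a : ∀ i : ℕ, A {i}) (i j : ℕ) : A {i, j} :=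
  α {j} {i, j} (by simp) ((a j)⁻¹) * α {i} {i, j} (by simp) (a i)

/-- The coboundary map `d₁ : C¹ → C²`. -/
def d1 {A : Finset ℕ → Type*} [∀ σ, Group (A σ)]
    (α : ∀ σ τ : Finset ℕ, σ ⊆ τ → (A σ →* A τ))
    (b : ∀ i j : ℕ, A {i, j}) (i j k : ℕ) : A {i, j, k} :=
  α {j, k} {i, j, k} (by simp [Finset.insert_subset_iff]) ((b j k)⁻¹) *
    α {i, k} {i, j, k} (by simp [Finset.insert_subset_iff]) (b i k) *
    α {i, j} {i, j, k} (by simp [Finset.insert_subset_iff]) ((b i j)⁻¹)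

/-- The right action of `C⁰` on `C¹`. -/
def act {A : Finset ℕ → Type*} [∀ σ, Group (A σ)]
    (α : ∀ σ τ : Finset ℕ, σ ⊆ τ → (A σ →* A τ))
    (b : ∀ i j : ℕ, A {i, j}) (a : ∀ i : ℕ, A {i}) (i j : ℕ) : A {i, j} :=
  α {j} {i, j} (by simp) ((a j)⁻¹) * b i j * α {i} {i, j} (by simp) (a i)

section
variable {A : Finset ℕ → Type*} [∀ σ, Group (A σ)]
variable (S : Set (Finset ℕ)) (α : ∀ σ τ : Finset ℕ, σ ⊆ τ → (A σ →* A τ))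
variable (N : ∀ σ, Subgroup (A σ))

/-- `z ∈ Z¹(X,𝒜)`: the 1-cocycle condition. -/
def IsCocycle (z : ∀ i j : ℕ, A {i, j}) : Prop :=
  ∀ i j k : ℕ, i < j → j < k → ({i, j, k} : Finset ℕ) ∈ S → d1 α z i j k = 1

/-- a 1-cochain has all its values in the normal subsystem `𝒩`. -/
def InN1 (z : ∀ i j : ℕ, A {i, j}) : Prop :=
  ∀ i j : ℕ, i < j → ({i, j} : Finset ℕ) ∈ S → z i j ∈ N {i, j}

/-- a 0-cochain has all its values in the normal subsystem `𝒩`, i.e. lies in `C⁰(𝒩)`. -/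
def InN0 (m : ∀ i : ℕ, A {i}) : Prop :=
  ∀ i : ℕ, ({i} : Finset ℕ) ∈ S → m i ∈ N {i}

/-- two `𝒩`-valued 1-cochains are in the same `C⁰(𝒩)`-orbit, i.e. represent the
same class in `H¹(X,𝒩)`. -/
def RelN (z z' : ∀ i j : ℕ, A {i, j}) : Prop :=
  ∃ m : ∀ i : ℕ, A {i}, InN0 S N m ∧
    ∀ i j : ℕ, i < j → ({i, j} : Finset ℕ) ∈ S → z' i j = act α z m i j

/-- a 0-cochain with values in `𝒜` represents an element of `Z⁰(X, 𝒜/𝒩)`,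
i.e. an element of `H⁰(X, 𝒜/𝒩)`. -/
def IsH0Bar (a : ∀ i : ℕ, A {i}) : Prop :=
  ∀ i j : ℕ, i < j → ({i, j} : Finset ℕ) ∈ S → d0 α a i j ∈ N {i, j}

end

def IsCompatibleOn {A : Finset ℕ → Type*} [∀ σ, Group (A σ)] (S : Set (Finset ℕ))
    (α : ∀ σ τ : Finset ℕ, σ ⊆ τ → (A σ →* A τ)) : Prop :=
  ∀ (σ ρ τ : Finset ℕ) (h1 : σ ⊆ ρ) (h2 : ρ ⊆ τ), σ ∈ S → ρ ∈ S → τ ∈ S →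
    ∀ x : A σ, α σ τ (h1.trans h2) x = α ρ τ h2 (α σ ρ h1 x)

section
variable {A : Finset ℕ → Type*} [∀ σ, Group (A σ)] (α : ∀ σ τ : Finset ℕ, σ ⊆ τ → (A σ →* A τ))

theorem act_one (b : ∀ i j : ℕ, A {i, j}) : act α b 1 = b := by
  funext i j
  simp [act]

theorem act_act (b : ∀ i j : ℕ, A {i, j}) (a a' : ∀ i : ℕ, A {i}) :
    act α (act α b a) a' = act α b (a * a') := by
  funext i j
  simp only [act, Pi.mul_apply, map_mul, map_inv, mul_inv_rev]
  group

theorem act_eq_conj_mul_d0 (b : ∀ i j : ℕ, A {i, j}) (a : ∀ i : ℕ, A {i}) (i j : ℕ) :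
    act α b a i j =
      (α {j} {i, j} (by simp) (a j))⁻¹ * b i j * α {j} {i, j} (by simp) (a j) *
        d0 α a i j := by
  simp only [act, d0, map_inv]
  group

theorem act_mem_iff_d0_mem {i j : ℕ} {N : Subgroup (A {i, j})} [hN : N.Normal]
    {b : ∀ i j : ℕ, A {i, j}} (hb : b i j ∈ N) (a : ∀ i : ℕ, A {i}) :
    act α b a i j ∈ N ↔ d0 α a i j ∈ N := by
  rw [act_eq_conj_mul_d0]
  refine Subgroup.mul_mem_cancel_left N ?_
  simpa using hN.conj_mem _ hb (α {j} {i, j} (by simp) (a j))⁻¹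

variable {S : Set (Finset ℕ)}

theorem d1_act (hX : IsLowerSet S) (hα : IsCompatibleOn S α)
    (b : ∀ i j : ℕ, A {i, j}) (a : ∀ i : ℕ, A {i}) {i j k : ℕ} (hijk : {i, j, k} ∈ S) :
    d1 α (act α b a) i j k =
      (α {j} {i, j, k} (by simp) (a j))⁻¹ * d1 α b i j k *
        α {j} {i, j, k} (by simp) (a j) := by
  have hface : ∀ v e (hv : {v} ⊆ e) (he : e ⊆ {i, j, k}) (x : A {v}),
      α e {i, j, k} he (α {v} e hv x) = α {v} {i, j, k} (hv.trans he) x := fun v e hv he x =>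
    (hα _ _ _ hv he (hX (hv.trans he) hijk) (hX he hijk) hijk x).symm
  simp only [d1, act, map_inv, map_mul, mul_inv_rev, inv_inv, hface]
  group

theorem IsCocycle.act (hX : IsLowerSet S) (hα : IsCompatibleOn S α)
    {b : ∀ i j : ℕ, A {i, j}} (hb : IsCocycle S α b) (a : ∀ i : ℕ, A {i}) :
    IsCocycle S α (act α b a) := by
  intro i j k hij hjk hijk
  rw [d1_act α hX hα b a hijk, hb i j k hij hjk hijk, mul_one, inv_mul_cancel]

variable {N : ∀ σ, Subgroup (A σ)}

theorem InN1.act (hnormal : ∀ σ ∈ S, (N σ).Normal) {b : ∀ i j : ℕ, A {i, j}}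
    {a : ∀ i : ℕ, A {i}} (hb : InN1 S N b) (ha : IsH0Bar S α N a) :
    InN1 S N (act α b a) := fun i j hij hS =>
  (act_mem_iff_d0_mem α (hN := hnormal _ hS) (hb i j hij hS) a).2 (ha i j hij hS)

theorem RelN.act (hnormal : ∀ σ ∈ S, (N σ).Normal) {b b' : ∀ i j : ℕ, A {i, j}}
    (hbb' : RelN S α N b b') (a : ∀ i : ℕ, A {i}) {m : ∀ i : ℕ, A {i}} (hm : InN0 S N m) :
    RelN S α N (act α b a) (act α b' (a * m)) := by
  obtain ⟨m₀, hm₀, hb'⟩ := hbb'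
  refine ⟨a⁻¹ * m₀ * a * m, fun i hi => mul_mem ?_ (hm i hi), fun i j hij hS => ?_⟩
  · simpa using (hnormal _ hi).conj_mem _ (hm₀ i hi) (a i)⁻¹
  have hb'_eq : _root_.act α b' (a * m) i j =
      _root_.act α (_root_.act α b m₀) (a * m) i j := by
    simp only [_root_.act, hb' i j hij hS]
  rw [hb'_eq, act_act, act_act]
  congr 1
  group

theorem isH0Bar_of_act_eq (hnormal : ∀ σ ∈ S, (N σ).Normal) {b b' : ∀ i j : ℕ, A {i, j}}
    (hb : InN1 S N b) (hb' : InN1 S N b') {c : ∀ i : ℕ, A {i}}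
    (hc : ∀ i j : ℕ, i < j → ({i, j} : Finset ℕ) ∈ S → b' i j = act α b c i j) :
    IsH0Bar S α N c := fun i j hij hS =>
  (act_mem_iff_d0_mem α (hN := hnormal _ hS) (hb i j hij hS) c).1
    (hc i j hij hS ▸ hb' i j hij hS)

end

theorem H0_quotient_acts_on_H1_of_normal_subsystem_general
    (S : Set (Finset ℕ))
    (hdown : ∀ τ ∈ S, ∀ σ : Finset ℕ, σ ⊆ τ → σ ∈ S)
    (A : Finset ℕ → Type*) [∀ σ, Group (A σ)]
    (α : ∀ σ τ : Finset ℕ, σ ⊆ τ → (A σ →* A τ))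
    (hcomp : ∀ (σ ρ τ : Finset ℕ) (h1 : σ ⊆ ρ) (h2 : ρ ⊆ τ),
      σ ∈ S → ρ ∈ S → τ ∈ S →
      ∀ x : A σ, α σ τ (h1.trans h2) x = α ρ τ h2 (α σ ρ h1 x))
    (N : ∀ σ, Subgroup (A σ))
    (hnormal : ∀ σ ∈ S, (N σ).Normal) :
    -- the action preserves 𝒩-valued cocycles
    (∀ (a : ∀ i : ℕ, A {i}) (n : ∀ i j : ℕ, A {i, j}),
      IsH0Bar S α N a → InN1 S N n →
      InN1 S N (act α n a) ∧ (IsCocycle S α n → IsCocycle S α (act α n a))) ∧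
    -- well-definedness: changing the lift `a` by `m ∈ C⁰(𝒩)` and the
    -- representative `n` within its class gives the same class `[nᵃ]`
    (∀ (a m : ∀ i : ℕ, A {i}) (n n' : ∀ i j : ℕ, A {i, j}),
      IsH0Bar S α N a → InN0 S N m → RelN S α N n n' →
      RelN S α N (act α n a) (act α n' (fun i => a i * m i))) ∧
    -- the orbits are precisely the fibers of `i₁ : H¹(X,𝒩) → H¹(X,𝒜)`
    (∀ n n' : ∀ i j : ℕ, A {i, j},
      IsCocycle S α n → InN1 S N n → IsCocycle S α n' → InN1 S N n' →
      ((∃ c : ∀ i : ℕ, A {i}, ∀ i j : ℕ, i < j → ({i, j} : Finset ℕ) ∈ S →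
          n' i j = act α n c i j) ↔
        (∃ a : ∀ i : ℕ, A {i}, IsH0Bar S α N a ∧ RelN S α N (act α n a) n'))) := by
  have hX : IsLowerSet S := fun _ _ h hτ => hdown _ hτ _ h
  refine ⟨fun a n ha hn => ⟨hn.act α hnormal ha, fun hcoc => hcoc.act α hX hcomp a⟩,
    fun a m n n' _ hm hnn' => hnn'.act α hnormal a hm, fun n n' _ hn _ hn' => ⟨?_, ?_⟩⟩
  · rintro ⟨c, hc⟩
    refine ⟨c, isH0Bar_of_act_eq α hnormal hn hn' hc, 1, fun i _ => one_mem _, ?_⟩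
    simpa only [act_one] using hc
  · rintro ⟨a, -, m, -, hm⟩
    exact ⟨a * m, fun i j hij hS => by rw [hm i j hij hS, act_act]⟩

/-- for a normal subsystem `𝒩 ⊴ 𝒜`, the group `H⁰(X,𝒜/𝒩)` acts on
`H¹(X,𝒩)` by `[n]^{ā} = [nᵃ]` for any lift `a` of `ā`; this is well defined
(independent of the representative `n` and of the lift of `ā`, and keeps the class
inside `H¹(X,𝒩)`), and its orbits are exactly the fibers of the natural map
`i₁ : H¹(X,𝒩) → H¹(X,𝒜)`. -/
theorem H0_quotient_acts_on_H1_of_normal_subsystem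
    (S : Set (Finset ℕ))
    (hdown : ∀ τ ∈ S, ∀ σ : Finset ℕ, σ ⊆ τ → σ ∈ S)
    (A : Finset ℕ → Type*) [∀ σ, Group (A σ)]
    (α : ∀ σ τ : Finset ℕ, σ ⊆ τ → (A σ →* A τ))
    (hcomp : ∀ (σ ρ τ : Finset ℕ) (h1 : σ ⊆ ρ) (h2 : ρ ⊆ τ),
      σ ∈ S → ρ ∈ S → τ ∈ S →
      ∀ x : A σ, α σ τ (h1.trans h2) x = α ρ τ h2 (α σ ρ h1 x))
    (N : ∀ σ, Subgroup (A σ))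
    (hnormal : ∀ σ ∈ S, (N σ).Normal)
    (hmap : ∀ (σ τ : Finset ℕ) (h : σ ⊆ τ), σ ∈ S → τ ∈ S →
      ∀ x ∈ N σ, α σ τ h x ∈ N τ) :
    -- the action preserves 𝒩-valued cocycles
    (∀ (a : ∀ i : ℕ, A {i}) (n : ∀ i j : ℕ, A {i, j}),
      IsH0Bar S α N a → InN1 S N n →
      InN1 S N (act α n a) ∧ (IsCocycle S α n → IsCocycle S α (act α n a))) ∧
    -- well-definedness: changing the lift `a` by `m ∈ C⁰(𝒩)` and the
    -- representative `n` within its class gives the same class `[nᵃ]`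
    (∀ (a m : ∀ i : ℕ, A {i}) (n n' : ∀ i j : ℕ, A {i, j}),
      IsH0Bar S α N a → InN0 S N m → RelN S α N n n' →
      RelN S α N (act α n a) (act α n' (fun i => a i * m i))) ∧
    -- the orbits are precisely the fibers of `i₁ : H¹(X,𝒩) → H¹(X,𝒜)`
    (∀ n n' : ∀ i j : ℕ, A {i, j},
      IsCocycle S α n → InN1 S N n → IsCocycle S α n' → InN1 S N n' →
      ((∃ c : ∀ i : ℕ, A {i}, ∀ i j : ℕ, i < j → ({i, j} : Finset ℕ) ∈ S →
          n' i j = act α n c i j) ↔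
        (∃ a : ∀ i : ℕ, A {i}, IsH0Bar S α N a ∧ RelN S α N (act α n a) n'))) :=
  H0_quotient_acts_on_H1_of_normal_subsystem_general S hdown A α hcomp N hnormal
end

section
/- Every amalgam of type G_0 over X is isomorphic to a normalized amalgam, where normalized means that for every simplex τ of rank ≥ 1, the inclusion map φ^{τ̄}_τ equals the reference map ψ^{τ̄}_τ, τ̄ being the least maximal proper face of τ in the ordering induced by the vertex ordering. -/
section
variable (G : Finset ℕ → Type*) [∀ σ, Group (G σ)]

/-- `φ` is (the family of connecting maps of) a simplicial amalgam on the
simplicial complex with simplex set `S`, with groups `G_σ`. -/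
structure IsAmalgam (S : Set (Finset ℕ))
    (φ : ∀ σ τ : Finset ℕ, σ ⊆ τ → (G τ →* G σ)) : Prop where
  inj : ∀ (σ τ : Finset ℕ) (h : σ ⊆ τ), σ ∈ S → τ ∈ S →
    Function.Injective (φ σ τ h)
  comp : ∀ (σ ρ τ : Finset ℕ) (h1 : σ ⊆ ρ) (h2 : ρ ⊆ τ),
    σ ∈ S → ρ ∈ S → τ ∈ S →
    ∀ x : G τ, φ σ τ (h1.trans h2) x = φ σ ρ h1 (φ ρ τ h2 x)

/-- `φ` is an amalgam of type `𝒢₀ = {G_σ, ψ}`: same groups, and the connecting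
maps have the same images `Ḡ_{σ,τ} = ψ^σ_τ(G_τ)`. -/
structure IsAmalgamOfType (S : Set (Finset ℕ))
    (ψ φ : ∀ σ τ : Finset ℕ, σ ⊆ τ → (G τ →* G σ)) : Prop where
  isAmalgam : IsAmalgam G S φ
  range_eq : ∀ (σ τ : Finset ℕ) (h : σ ⊆ τ), σ ∈ S → τ ∈ S →
    Set.range (φ σ τ h) = Set.range (ψ σ τ h)

/-- `φ` is normalized (w.r.t. the reference amalgam `ψ`): for every simplex `τ`
of rank `≥ 1`, `φ^{τ̄}_τ = ψ^{τ̄}_τ`, where `τ̄` is `τ` minus its largest vertex. -/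
def IsNormalized (S : Set (Finset ℕ))
    (ψ φ : ∀ σ τ : Finset ℕ, σ ⊆ τ → (G τ →* G σ)) : Prop :=
  ∀ (τ : Finset ℕ) (hne : τ.Nonempty), τ ∈ S → 2 ≤ τ.card →
    φ (τ.erase (τ.max' hne)) τ (Finset.erase_subset _ _) =
      ψ (τ.erase (τ.max' hne)) τ (Finset.erase_subset _ _)

/-- `e` is an isomorphism from the amalgam `φ1` to the amalgam `φ2`. -/
def IsAmalgamIso (S : Set (Finset ℕ))
    (φ1 φ2 : ∀ σ τ : Finset ℕ, σ ⊆ τ → (G τ →* G σ))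
    (e : ∀ σ, G σ ≃* G σ) : Prop :=
  ∀ (σ τ : Finset ℕ) (h : σ ⊆ τ), σ ∈ S → τ ∈ S →
    ∀ x : G τ, e σ (φ1 σ τ h x) = φ2 σ τ h (e τ x)

end

/-!
Conjugating `φ` by automorphisms `e_σ` of the groups `G_σ` gives an isomorphic amalgam, and it is
of type `ψ` as soon as every `e_σ` carries the image of `φ^σ_τ` onto the image of `ψ^σ_τ`. Such
automorphisms are built by recursion on `|σ|`: `e_σ = (ψ^{σ̄}_σ)⁻¹ ∘ e_{σ̄} ∘ φ^{σ̄}_σ`, which makes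
sense because `e_{σ̄}` carries the image of `φ^{σ̄}_σ` onto that of `ψ^{σ̄}_σ`, and which makes the
conjugated map on `σ̄ ⊆ σ` equal to `ψ^{σ̄}_σ`. The image condition passes from `σ̄` to `σ` through
`φ^{σ̄}_τ = φ^{σ̄}_σ ∘ φ^σ_τ`, its counterpart for `ψ`, and injectivity of `ψ^{σ̄}_σ`.
-/

open Function

namespace MulEquiv

variable {A B : Type*} [Group A] [Group B] {f g : A →* B}

noncomputable def ofImageRangeEq (hf : Injective f) (hg : Injective g) (e : B ≃* B)
    (h : e '' Set.range f = Set.range g) : A ≃* A :=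
  (MonoidHom.ofInjective hf).trans <| (e.subgroupMap f.range).trans <|
    (subgroupCongr (SetLike.coe_injective (by simpa using h))).trans
      (MonoidHom.ofInjective hg).symm

theorem apply_ofImageRangeEq (hf : Injective f) (hg : Injective g) (e : B ≃* B)
    (h : e '' Set.range f = Set.range g) (x : A) :
    g (ofImageRangeEq hf hg e h x) = e (f x) := by
  simp [ofImageRangeEq, MonoidHom.apply_ofInjective_symm, MonoidHom.ofInjective_apply]

end MulEquiv

def lowerFace (τ : Finset ℕ) (hne : τ.Nonempty) : Finset ℕ := τ.erase (τ.max' hne)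

theorem lowerFace_subset (τ : Finset ℕ) (hne : τ.Nonempty) : lowerFace τ hne ⊆ τ :=
  Finset.erase_subset _ _

theorem lowerFace_ssubset (τ : Finset ℕ) (hne : τ.Nonempty) : lowerFace τ hne ⊂ τ :=
  Finset.erase_ssubset (τ.max'_mem hne)

theorem lowerFace_nonempty {τ : Finset ℕ} (hne : τ.Nonempty) (h2 : 2 ≤ τ.card) :
    (lowerFace τ hne).Nonempty := by
  rw [← Finset.card_pos, lowerFace, Finset.card_erase_of_mem (τ.max'_mem hne)]
  omega

theorem lowerFace_mem {S : Set (Finset ℕ)}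
    (hdown : ∀ τ ∈ S, ∀ σ : Finset ℕ, σ.Nonempty → σ ⊆ τ → σ ∈ S)
    {τ : Finset ℕ} (hne : τ.Nonempty) (hτ : τ ∈ S) (h2 : 2 ≤ τ.card) : lowerFace τ hne ∈ S :=
  hdown τ hτ _ (lowerFace_nonempty hne h2) (lowerFace_subset τ hne)

section
variable {G : Finset ℕ → Type*} [∀ σ, Group (G σ)] {S : Set (Finset ℕ)}
  {ψ φ : ∀ σ τ : Finset ℕ, σ ⊆ τ → (G τ →* G σ)}

theorem IsAmalgam.image_range (hφ : IsAmalgam G S φ) {σ ρ τ : Finset ℕ} (h1 : σ ⊆ ρ)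
    (h2 : ρ ⊆ τ) (hσ : σ ∈ S) (hρ : ρ ∈ S) (hτ : τ ∈ S) :
    φ σ ρ h1 '' Set.range (φ ρ τ h2) = Set.range (φ σ τ (h1.trans h2)) := by
  rw [← Set.range_comp]
  congr 1
  funext x
  exact (hφ.comp σ ρ τ h1 h2 hσ hρ hτ x).symm

def conjAmalgam (φ : ∀ σ τ : Finset ℕ, σ ⊆ τ → (G τ →* G σ)) (e : ∀ σ, G σ ≃* G σ) :
    ∀ σ τ : Finset ℕ, σ ⊆ τ → (G τ →* G σ) :=
  fun σ τ h => (e σ).toMonoidHom.comp ((φ σ τ h).comp (e τ).symm.toMonoidHom)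

theorem conjAmalgam_apply (e : ∀ σ, G σ ≃* G σ) {σ τ : Finset ℕ} (h : σ ⊆ τ) (x : G τ) :
    conjAmalgam φ e σ τ h x = e σ (φ σ τ h ((e τ).symm x)) :=
  rfl

theorem range_conjAmalgam (e : ∀ σ, G σ ≃* G σ) {σ τ : Finset ℕ} (h : σ ⊆ τ) :
    Set.range (conjAmalgam φ e σ τ h) = e σ '' Set.range (φ σ τ h) := by
  rw [← Set.range_comp]
  exact EquivLike.range_comp (e σ ∘ φ σ τ h) (e τ).symm

theorem IsAmalgam.conjAmalgam (hφ : IsAmalgam G S φ) (e : ∀ σ, G σ ≃* G σ) :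
    IsAmalgam G S (conjAmalgam φ e) where
  inj σ τ h hσ hτ :=
    ((e σ).injective.comp (hφ.inj σ τ h hσ hτ)).comp (e τ).symm.injective
  comp σ ρ τ h1 h2 hσ hρ hτ x := by
    simp only [conjAmalgam_apply, MulEquiv.symm_apply_apply, hφ.comp σ ρ τ h1 h2 hσ hρ hτ]

theorem isAmalgamIso_conjAmalgam (e : ∀ σ, G σ ≃* G σ) :
    IsAmalgamIso G S φ (conjAmalgam φ e) e := by
  intro σ τ h _ _ x
  rw [conjAmalgam_apply, MulEquiv.symm_apply_apply]

/- The guard holds at every simplex of rank `≥ 1` of an amalgam of type `ψ`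
(`image_range_normalizingAut`); `refl` only makes the recursion total. -/
open Classical in
noncomputable def normalizingAut (ψ φ : ∀ σ τ : Finset ℕ, σ ⊆ τ → (G τ →* G σ))
    (σ : Finset ℕ) : G σ ≃* G σ :=
  if h2 : 2 ≤ σ.card then
    have hne : σ.Nonempty := Finset.card_pos.mp (by omega)
    if h : Injective (φ (lowerFace σ hne) σ (lowerFace_subset σ hne)) ∧
        Injective (ψ (lowerFace σ hne) σ (lowerFace_subset σ hne)) ∧
        normalizingAut ψ φ (lowerFace σ hne) '' Set.range (φ _ σ (lowerFace_subset σ hne)) =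
          Set.range (ψ _ σ (lowerFace_subset σ hne)) then
      MulEquiv.ofImageRangeEq h.1 h.2.1 _ h.2.2
    else MulEquiv.refl _
  else MulEquiv.refl _
termination_by σ.card
decreasing_by exact Finset.card_lt_card (lowerFace_ssubset σ hne)

theorem normalizingAut_lowerFace_apply {σ : Finset ℕ} (hne : σ.Nonempty) (h2 : 2 ≤ σ.card)
    (hf : Injective (φ (lowerFace σ hne) σ (lowerFace_subset σ hne)))
    (hg : Injective (ψ (lowerFace σ hne) σ (lowerFace_subset σ hne)))
    (hrange : normalizingAut ψ φ (lowerFace σ hne) '' Set.range (φ _ σ (lowerFace_subset σ hne)) =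
      Set.range (ψ _ σ (lowerFace_subset σ hne))) (x : G σ) :
    ψ _ σ (lowerFace_subset σ hne) (normalizingAut ψ φ σ x) =
      normalizingAut ψ φ (lowerFace σ hne) (φ _ σ (lowerFace_subset σ hne) x) := by
  rw [normalizingAut, dif_pos h2, dif_pos ⟨hf, hg, hrange⟩]
  exact MulEquiv.apply_ofImageRangeEq hf hg _ hrange x

variable (hdown : ∀ τ ∈ S, ∀ σ : Finset ℕ, σ.Nonempty → σ ⊆ τ → σ ∈ S)
  (hψ : IsAmalgam G S ψ) (hφ : IsAmalgamOfType G S ψ φ)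
include hdown hψ hφ

theorem image_range_normalizingAut {σ : Finset ℕ} (hσ : σ ∈ S) {τ : Finset ℕ} (h : σ ⊆ τ)
    (hτ : τ ∈ S) : normalizingAut ψ φ σ '' Set.range (φ σ τ h) = Set.range (ψ σ τ h) := by
  induction σ using Finset.strongInduction generalizing τ with
  | H σ ih =>
    by_cases h2 : 2 ≤ σ.card
    · have hne : σ.Nonempty := Finset.card_pos.mp (by omega)
      set σ' := lowerFace σ hne
      have hσ' : σ' ∈ S := lowerFace_mem hdown hne hσ h2
      have h' : σ' ⊆ σ := lowerFace_subset σ hne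
      have hg := hψ.inj σ' σ h' hσ' hσ
      have key : ∀ x, ψ σ' σ h' (normalizingAut ψ φ σ x) =
          normalizingAut ψ φ σ' (φ σ' σ h' x) :=
        normalizingAut_lowerFace_apply hne h2 (hφ.isAmalgam.inj σ' σ h' hσ' hσ) hg
          (ih σ' (lowerFace_ssubset σ hne) hσ' h' hσ)
      apply Set.image_injective.mpr hg
      calc ψ σ' σ h' '' (normalizingAut ψ φ σ '' Set.range (φ σ τ h))
          = normalizingAut ψ φ σ' '' (φ σ' σ h' '' Set.range (φ σ τ h)) := by
            simp only [Set.image_image, key]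
        _ = normalizingAut ψ φ σ' '' Set.range (φ σ' τ (h'.trans h)) := by
            rw [hφ.isAmalgam.image_range h' h hσ' hσ hτ]
        _ = Set.range (ψ σ' τ (h'.trans h)) :=
            ih σ' (lowerFace_ssubset σ hne) hσ' (h'.trans h) hτ
        _ = ψ σ' σ h' '' Set.range (ψ σ τ h) := (hψ.image_range h' h hσ' hσ hτ).symm
    · rw [normalizingAut, dif_neg h2]
      simpa using hφ.range_eq σ τ h hσ hτ

theorem conjAmalgam_normalizingAut_lowerFace {τ : Finset ℕ} (hne : τ.Nonempty) (hτ : τ ∈ S)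
    (h2 : 2 ≤ τ.card) :
    conjAmalgam φ (normalizingAut ψ φ) (lowerFace τ hne) τ (lowerFace_subset τ hne) =
      ψ (lowerFace τ hne) τ (lowerFace_subset τ hne) := by
  have hτ' := lowerFace_mem hdown hne hτ h2
  ext x
  have key := normalizingAut_lowerFace_apply hne h2 (hφ.isAmalgam.inj _ τ _ hτ' hτ)
    (hψ.inj _ τ _ hτ' hτ) (image_range_normalizingAut hdown hψ hφ hτ' _ hτ)
    ((normalizingAut ψ φ τ).symm x)
  rw [MulEquiv.apply_symm_apply] at key
  exact key.symm

end

/-- every amalgam of type `𝒢₀` over `X` is isomorphic to a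
normalized amalgam of type `𝒢₀`. -/
theorem amalgam_isomorphic_to_normalized
    (S : Set (Finset ℕ))
    (hdown : ∀ τ ∈ S, ∀ σ : Finset ℕ, σ.Nonempty → σ ⊆ τ → σ ∈ S)
    (G : Finset ℕ → Type*) [∀ σ, Group (G σ)]
    (ψ : ∀ σ τ : Finset ℕ, σ ⊆ τ → (G τ →* G σ))
    (hψ : IsAmalgam G S ψ)
    (φ : ∀ σ τ : Finset ℕ, σ ⊆ τ → (G τ →* G σ))
    (hφ : IsAmalgamOfType G S ψ φ) :
    ∃ χ : ∀ σ τ : Finset ℕ, σ ⊆ τ → (G τ →* G σ),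
      IsAmalgamOfType G S ψ χ ∧ IsNormalized G S ψ χ ∧
      ∃ e : ∀ σ, G σ ≃* G σ, IsAmalgamIso G S φ χ e := by
  refine ⟨conjAmalgam φ (normalizingAut ψ φ), ⟨hφ.isAmalgam.conjAmalgam _, ?_⟩, ?_,
    normalizingAut ψ φ, isAmalgamIso_conjAmalgam _⟩
  · intro σ τ h hσ hτ
    rw [range_conjAmalgam]
    exact image_range_normalizingAut hdown hψ hφ hσ h hτ
  · intro τ hne hτ h2
    exact conjAmalgam_normalizingAut_lowerFace hdown hψ hφ hne hτ h2
end

section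
/- Let X be the 1-simplex with vertices 1,2 and let G_0 = {G_1, G_2, G_12; ψ^1, ψ^2} be an amalgam over X. Let A_i = {g ∈ Aut(G_i) : g(ψ^i(G_12)) = ψ^i(G_12)} for i=1,2, A_12 = Aut(G_12), and Ā_i = ad(ψ^i)(A_i) ≤ A_12. Then the isomorphism classes of amalgams of type G_0 are in bijection with the double cosets Ā_2 \ A_12 / Ā_1. -/
section
variable (G1 G2 G12 : Type*) [Group G1] [Group G2] [Group G12]

/-- An amalgam of type `𝒢₀ = {G₁, G₂, G₁₂; ψ¹, ψ²}`: the same three groups,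
with injective connecting maps having the same images as `ψ¹, ψ²`. -/
structure EdgeAmalgamOfType (ψ1 : G12 →* G1) (ψ2 : G12 →* G2) where
  φ1 : G12 →* G1
  φ2 : G12 →* G2
  inj1 : Function.Injective φ1
  inj2 : Function.Injective φ2
  range1 : Set.range φ1 = Set.range ψ1
  range2 : Set.range φ2 = Set.range ψ2

/-- Isomorphism of two amalgams over the 1-simplex. -/
def EdgeAmalgamIso (ψ1 : G12 →* G1) (ψ2 : G12 →* G2)
    (A B : EdgeAmalgamOfType G1 G2 G12 ψ1 ψ2) : Prop :=
  ∃ (e1 : G1 ≃* G1) (e2 : G2 ≃* G2) (e12 : G12 ≃* G12),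
    (∀ x : G12, e1 (A.φ1 x) = B.φ1 (e12 x)) ∧
    (∀ x : G12, e2 (A.φ2 x) = B.φ2 (e12 x))

/-- `Ā₁ = ad(ψ¹)(A₁) ≤ A₁₂ = Aut(G₁₂)`, where
`A₁ = {f ∈ Aut(G₁) : f(ψ¹(G₁₂)) = ψ¹(G₁₂)}` and `ad(ψ¹)(f) = (ψ¹)⁻¹∘f∘ψ¹`. -/
def Abar1 (ψ1 : G12 →* G1) : Set (MulAut G12) :=
  {b | ∃ f : MulAut G1,
    ((f : G1 → G1) '' Set.range ψ1 = Set.range ψ1) ∧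
    ∀ x : G12, ψ1 (b x) = f (ψ1 x)}

/-- `Ā₂ = ad(ψ²)(A₂) ≤ A₁₂ = Aut(G₁₂)`. -/
def Abar2 (ψ2 : G12 →* G2) : Set (MulAut G12) :=
  {b | ∃ f : MulAut G2,
    ((f : G2 → G2) '' Set.range ψ2 = Set.range ψ2) ∧
    ∀ x : G12, ψ2 (b x) = f (ψ2 x)}

end

/-! The amalgam `{φ¹, φ²}` determines the automorphisms `α = (φ¹)⁻¹ψ¹` and `β = (φ²)⁻¹ψ²`
of `G₁₂`; its invariant is `β⁻¹α`. An automorphism `c` of `G₁₂` is the `G₁₂`-component of an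
isomorphism `{φ¹, φ²} → {φ'¹, φ'²}` exactly when the twists `α'⁻¹cα` and `β'⁻¹cβ` lie in `Ā₁`
and `Ā₂`, and eliminating `c` this says that the two invariants lie in the same double coset.
Every `b` is the invariant of the normalized amalgam `{ψ¹b⁻¹, ψ²}`. -/

section MulAutOfRangeEq
variable {K G : Type*} [Group K] [Group G]

/-- `φ⁻¹ ∘ ψ`, for injective homomorphisms `φ, ψ` with the same range. -/
noncomputable def MulAut.ofRangeEq (φ ψ : K →* G) (hφ : Function.Injective φ)
    (hψ : Function.Injective ψ) (h : Set.range ψ = Set.range φ) : MulAut K :=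
  (MonoidHom.ofInjective hψ).trans
    ((MulEquiv.subgroupCongr (SetLike.ext' (by simpa using h))).trans
      (MonoidHom.ofInjective hφ).symm)

variable {φ ψ : K →* G} {hφ : Function.Injective φ} {hψ : Function.Injective ψ}
  {h : Set.range ψ = Set.range φ}

theorem MulAut.apply_ofRangeEq (x : K) : φ (MulAut.ofRangeEq φ ψ hφ hψ h x) = ψ x := by
  simp only [MulAut.ofRangeEq, MulEquiv.trans_apply, MonoidHom.apply_ofInjective_symm,
    MulEquiv.subgroupCongr_apply, MonoidHom.ofInjective_apply]

theorem MulAut.eq_ofRangeEq {c : MulAut K} (hc : ∀ x, φ (c x) = ψ x) :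
    c = MulAut.ofRangeEq φ ψ hφ hψ h :=
  MulEquiv.ext fun x => hφ (by rw [hc, MulAut.apply_ofRangeEq])

end MulAutOfRangeEq

section Abar
variable {K G : Type*} [Group K] [Group G] {ψ : K →* G}

theorem mem_Abar1_iff {b : MulAut K} :
    b ∈ Abar1 G K ψ ↔ ∃ f : MulAut G, ∀ x, ψ (b x) = f (ψ x) := by
  refine ⟨fun ⟨f, _, hf⟩ => ⟨f, hf⟩, fun ⟨f, hf⟩ => ⟨f, ?_, hf⟩⟩
  calc (f : G → G) '' Set.range ψ = Set.range (ψ ∘ b) := by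
        rw [← Set.range_comp]; exact congrArg Set.range (funext hf).symm
    _ = Set.range ψ := EquivLike.range_comp _ _

theorem Abar2_eq_Abar1 : Abar2 G K ψ = Abar1 G K ψ := rfl

theorem one_mem_Abar1 : 1 ∈ Abar1 G K ψ :=
  mem_Abar1_iff.2 ⟨1, fun _ => rfl⟩

theorem inv_mem_Abar1 {b : MulAut K} (hb : b ∈ Abar1 G K ψ) : b⁻¹ ∈ Abar1 G K ψ := by
  obtain ⟨f, hf⟩ := mem_Abar1_iff.1 hb
  refine mem_Abar1_iff.2 ⟨f⁻¹, fun x => f.injective ?_⟩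
  rw [← hf, MulAut.apply_inv_self]
  exact (MulAut.apply_inv_self G f (ψ x)).symm

theorem exists_mulAut_comp_eq_iff {φ φ' : K →* G} {α α' : MulAut K}
    (hα : ∀ x, φ (α x) = ψ x) (hα' : ∀ x, φ' (α' x) = ψ x) (c : MulAut K) :
    (∃ e : MulAut G, ∀ x, e (φ x) = φ' (c x)) ↔ α'⁻¹ * c * α ∈ Abar1 G K ψ := by
  have hφ : ∀ y, ψ (α⁻¹ y) = φ y := fun y => by rw [← hα, MulAut.apply_inv_self]
  have hφ' : ∀ y, ψ (α'⁻¹ y) = φ' y := fun y => by rw [← hα', MulAut.apply_inv_self]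
  rw [mem_Abar1_iff]
  refine exists_congr fun e => ⟨fun he x => ?_, fun he x => ?_⟩
  · rw [MulAut.mul_apply, MulAut.mul_apply, hφ', ← he, hα]
  · rw [← hφ, ← he, MulAut.mul_apply, MulAut.mul_apply, MulAut.apply_inv_self, hφ']

end Abar

theorem exists_conj_mem_iff_double_coset {M : Type*} [Group M] {S T : Set M}
    (hS : ∀ a ∈ S, a⁻¹ ∈ S) (α β α' β' : M) :
    (∃ c, α'⁻¹ * c * α ∈ S ∧ β'⁻¹ * c * β ∈ T) ↔
      ∃ a1 ∈ S, ∃ a2 ∈ T, β'⁻¹ * α' = a2 * (β⁻¹ * α) * a1 := by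
  constructor
  · rintro ⟨c, hcS, hcT⟩
    exact ⟨_, hS _ hcS, _, hcT, by group⟩
  · rintro ⟨a1, ha1, a2, ha2, heq⟩
    obtain rfl : α' = β' * a2 * β⁻¹ * α * a1 := by
      rw [← mul_inv_cancel_left β' α', heq]
      group
    refine ⟨β' * a2 * β⁻¹, ?_, ?_⟩
    · convert hS a1 ha1 using 1; group
    · convert ha2 using 1; group

def Quot.equivOfSection {α β : Type*} {r : α → α → Prop} {s : β → β → Prop}
    (f : α → β) (g : β → α) (hfg : ∀ b, f (g b) = b) (hs : ∀ b, s b b)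
    (hrs : ∀ a a', r a a' ↔ s (f a) (f a')) : Quot r ≃ Quot s where
  toFun := Quot.lift (Quot.mk s ∘ f) fun a a' h => Quot.sound ((hrs a a').1 h)
  invFun := Quot.lift (Quot.mk r ∘ g) fun b b' h =>
    Quot.sound ((hrs _ _).2 (by rwa [hfg, hfg]))
  left_inv := Quot.ind fun a => Quot.sound ((hrs _ _).2 (by rw [hfg]; exact hs _))
  right_inv := Quot.ind fun b => congrArg (Quot.mk s) (hfg b)

namespace EdgeAmalgamOfType
variable {G1 G2 G12 : Type*} [Group G1] [Group G2] [Group G12]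
  {ψ1 : G12 →* G1} {ψ2 : G12 →* G2} (hψ1 : Function.Injective ψ1) (hψ2 : Function.Injective ψ2)

noncomputable def aut1 (A : EdgeAmalgamOfType G1 G2 G12 ψ1 ψ2) : MulAut G12 :=
  MulAut.ofRangeEq A.φ1 ψ1 A.inj1 hψ1 A.range1.symm

noncomputable def aut2 (A : EdgeAmalgamOfType G1 G2 G12 ψ1 ψ2) : MulAut G12 :=
  MulAut.ofRangeEq A.φ2 ψ2 A.inj2 hψ2 A.range2.symm

theorem apply_aut1 (A : EdgeAmalgamOfType G1 G2 G12 ψ1 ψ2) (x : G12) :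
    A.φ1 (A.aut1 hψ1 x) = ψ1 x :=
  MulAut.apply_ofRangeEq x

theorem apply_aut2 (A : EdgeAmalgamOfType G1 G2 G12 ψ1 ψ2) (x : G12) :
    A.φ2 (A.aut2 hψ2 x) = ψ2 x :=
  MulAut.apply_ofRangeEq x

noncomputable def invariant (A : EdgeAmalgamOfType G1 G2 G12 ψ1 ψ2) : MulAut G12 :=
  (A.aut2 hψ2)⁻¹ * A.aut1 hψ1

theorem invariant_eq {A : EdgeAmalgamOfType G1 G2 G12 ψ1 ψ2} {b : MulAut G12}
    (h2 : A.φ2 = ψ2) (h1 : ∀ x, A.φ1 (b x) = ψ1 x) : A.invariant hψ1 hψ2 = b := by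
  rw [invariant, aut1, aut2, ← MulAut.eq_ofRangeEq h1,
    ← MulAut.eq_ofRangeEq (c := 1) fun x => by rw [h2]; rfl, inv_one, one_mul]

def normalized (hψ1 : Function.Injective ψ1) (hψ2 : Function.Injective ψ2) (b : MulAut G12) :
    EdgeAmalgamOfType G1 G2 G12 ψ1 ψ2 where
  φ1 := ψ1.comp b⁻¹.toMonoidHom
  φ2 := ψ2
  inj1 := hψ1.comp b⁻¹.injective
  inj2 := hψ2
  range1 := by rw [MonoidHom.coe_comp, MulEquiv.coe_toMonoidHom, EquivLike.range_comp]
  range2 := rfl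

theorem invariant_normalized (b : MulAut G12) :
    (normalized hψ1 hψ2 b).invariant hψ1 hψ2 = b :=
  invariant_eq hψ1 hψ2 rfl fun x => congrArg ψ1 (MulAut.inv_apply_self G12 b x)

theorem edgeAmalgamIso_iff (A B : EdgeAmalgamOfType G1 G2 G12 ψ1 ψ2) :
    EdgeAmalgamIso G1 G2 G12 ψ1 ψ2 A B ↔
      ∃ a1 ∈ Abar1 G1 G12 ψ1, ∃ a2 ∈ Abar2 G2 G12 ψ2,
        B.invariant hψ1 hψ2 = a2 * A.invariant hψ1 hψ2 * a1 := by
  have key : EdgeAmalgamIso G1 G2 G12 ψ1 ψ2 A B ↔ ∃ c : MulAut G12,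
      (∃ e1 : MulAut G1, ∀ x, e1 (A.φ1 x) = B.φ1 (c x)) ∧
        ∃ e2 : MulAut G2, ∀ x, e2 (A.φ2 x) = B.φ2 (c x) :=
    ⟨fun ⟨e1, e2, c, h1, h2⟩ => ⟨c, ⟨e1, h1⟩, ⟨e2, h2⟩⟩,
      fun ⟨c, ⟨e1, h1⟩, ⟨e2, h2⟩⟩ => ⟨e1, e2, c, h1, h2⟩⟩
  simp only [key, exists_mulAut_comp_eq_iff (A.apply_aut1 hψ1) (B.apply_aut1 hψ1),
    exists_mulAut_comp_eq_iff (A.apply_aut2 hψ2) (B.apply_aut2 hψ2), Abar2_eq_Abar1]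
  exact exists_conj_mem_iff_double_coset (fun _ => inv_mem_Abar1) _ _ _ _

end EdgeAmalgamOfType

open EdgeAmalgamOfType in
/-- Goldschmidt's Lemma: the isomorphism classes of amalgams of
type `𝒢₀ = {G₁, G₂, G₁₂}` are in bijection with the double cosets
`Ā₂ \ A₁₂ / Ā₁`; the bijection sends the class of a normalized amalgam
(`φ² = ψ²`) to the double coset of `a₁₂ = (φ¹)⁻¹ ∘ ψ¹`. -/
theorem goldschmidt_lemma
    (G1 G2 G12 : Type*) [Group G1] [Group G2] [Group G12]
    (ψ1 : G12 →* G1) (ψ2 : G12 →* G2)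
    (hψ1 : Function.Injective ψ1) (hψ2 : Function.Injective ψ2) :
    ∃ E : Quot (EdgeAmalgamIso G1 G2 G12 ψ1 ψ2) ≃
          Quot (fun b b' : MulAut G12 =>
            ∃ a1 ∈ Abar1 G1 G12 ψ1, ∃ a2 ∈ Abar2 G2 G12 ψ2, b' = a2 * b * a1),
      ∀ (A : EdgeAmalgamOfType G1 G2 G12 ψ1 ψ2) (b : MulAut G12),
        A.φ2 = ψ2 → (∀ x : G12, A.φ1 (b x) = ψ1 x) →
        E (Quot.mk _ A) = Quot.mk _ b := by
  refine ⟨Quot.equivOfSection (invariant hψ1 hψ2) (normalized hψ1 hψ2)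
    (invariant_normalized hψ1 hψ2)
    (fun b => ⟨1, one_mem_Abar1, 1, one_mem_Abar1, by rw [one_mul, mul_one]⟩)
    (edgeAmalgamIso_iff hψ1 hψ2), fun A b h2 h1 => ?_⟩
  exact congrArg (Quot.mk _) (invariant_eq hψ1 hψ2 h2 h1)
end
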